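/- Let f : ∂D → ℝ be 1-Lipschitz (take Λ₀ = ∂D) with f₋(x) < f₊(x) for every x ∈ D, and let E = {(x,θ) ∈ D × ℝ : f₋(x) < θ < f₊(x)} be the invisible domain of the graph of f. Then the closure of E in D̄ × ℝ meets ∂D × ℝ exactly in the graph of f: closure(E) ∩ (∂D × ℝ) = {(y, f(y)) : y ∈ ∂D}. (The paper's lemma: the invisible domain E(∂S) is contained in AdS and the intersection of its closure with the conformal boundary Ein₂ is exactly ∂S.) -/

import Mathlib

/-!
Over any point `x` of the hemisphere, the interval `(f₋(x), f₊(x))` lies within `d(x, y)` of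
`f(y)` for each boundary point `y`, since `f(y) ∓ d(x, y)` competes in the sup and the inf
defining `f₋` and `f₊`. The condition `|θ - f(y)| ≤ d(x, y)` is closed and forces `θ = f(y)` at
`x = y`, so the closure of `E` meets `∂D × ℝ` inside the graph. Conversely, moving from `y` into
`D` along the great circle through `e` gives points `x` with `d(x, y) = t → 0`, and over each of
them the nonempty interval `(f₋(x), f₊(x))` supplies points of `E` converging to `(y, f(y))`.
-/

open scoped RealInnerProductSpace

/-- The closed hemisphere `D̄ = {x ∈ S² : ⟪x,e⟫ ≥ 0}`. -/
def closedHemi (e : EuclideanSpace ℝ (Fin 3)) : Set (EuclideanSpace ℝ (Fin 3)) :=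
  {x | ‖x‖ = 1 ∧ 0 ≤ ⟪x, e⟫}

/-- The open hemisphere `D = {x ∈ S² : ⟪x,e⟫ > 0}`. -/
def openHemi (e : EuclideanSpace ℝ (Fin 3)) : Set (EuclideanSpace ℝ (Fin 3)) :=
  {x | ‖x‖ = 1 ∧ 0 < ⟪x, e⟫}

/-- The equatorial circle `∂D = {x ∈ S² : ⟪x,e⟫ = 0}`. -/
def equator (e : EuclideanSpace ℝ (Fin 3)) : Set (EuclideanSpace ℝ (Fin 3)) :=
  {x | ‖x‖ = 1 ∧ ⟪x, e⟫ = 0}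

/-- `f₋(x) = sup_{z ∈ Λ₀} (f z - d(x,z))`. -/
noncomputable def lowerEnv (Λ₀ : Set (EuclideanSpace ℝ (Fin 3)))
    (f : EuclideanSpace ℝ (Fin 3) → ℝ) (x : EuclideanSpace ℝ (Fin 3)) : ℝ :=
  sSup ((fun z => f z - Real.arccos ⟪x, z⟫) '' Λ₀)

/-- `f₊(x) = inf_{z ∈ Λ₀} (f z + d(x,z))`. -/
noncomputable def upperEnv (Λ₀ : Set (EuclideanSpace ℝ (Fin 3)))
    (f : EuclideanSpace ℝ (Fin 3) → ℝ) (x : EuclideanSpace ℝ (Fin 3)) : ℝ :=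
  sInf ((fun z => f z + Real.arccos ⟪x, z⟫) '' Λ₀)

open Real

section SphericalDistance

variable {F : Type*} [NormedAddCommGroup F] [InnerProductSpace ℝ F]

lemma arccos_inner_self_of_norm_eq_one {y : F} (hy : ‖y‖ = 1) : arccos ⟪y, y⟫ = 0 := by
  rw [real_inner_self_eq_norm_sq, hy, one_pow, arccos_one]

lemma norm_sub_le_arccos_inner {x y : F} (hx : ‖x‖ = 1) (hy : ‖y‖ = 1) :
    ‖x - y‖ ≤ arccos ⟪x, y⟫ := by
  have hinner : |⟪x, y⟫| ≤ 1 := by simpa [hx, hy] using abs_real_inner_le_norm x y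
  have hcos : cos (arccos ⟪x, y⟫) = ⟪x, y⟫ :=
    cos_arccos (abs_le.mp hinner).1 (abs_le.mp hinner).2
  have hsq : ‖x - y‖ ^ 2 = 2 - 2 * ⟪x, y⟫ := by
    rw [norm_sub_sq_real, hx, hy]; ring
  have hcos_ge := one_sub_sq_div_two_le_cos (x := arccos ⟪x, y⟫)
  rw [hcos] at hcos_ge
  exact (pow_le_pow_iff_left₀ (norm_nonneg _) (arccos_nonneg _) two_ne_zero).mp (by linarith)

end SphericalDistance

section Envelopes

variable {Λ₀ : Set (EuclideanSpace ℝ (Fin 3))} {f : EuclideanSpace ℝ (Fin 3) → ℝ}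
  {x y : EuclideanSpace ℝ (Fin 3)}

lemma bddAbove_sub_arccos_image
    (hLip : ∀ x ∈ Λ₀, ∀ y ∈ Λ₀, |f x - f y| ≤ arccos ⟪x, y⟫) (hy : y ∈ Λ₀) :
    BddAbove ((fun z => f z - arccos ⟪x, z⟫) '' Λ₀) := by
  refine ⟨f y + π, ?_⟩
  rintro _ ⟨z, hz, rfl⟩
  linarith [(abs_le.mp (hLip z hz y hy)).2, arccos_le_pi ⟪z, y⟫, arccos_nonneg ⟪x, z⟫]

lemma bddBelow_add_arccos_image
    (hLip : ∀ x ∈ Λ₀, ∀ y ∈ Λ₀, |f x - f y| ≤ arccos ⟪x, y⟫) (hy : y ∈ Λ₀) :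
    BddBelow ((fun z => f z + arccos ⟪x, z⟫) '' Λ₀) := by
  refine ⟨f y - π, ?_⟩
  rintro _ ⟨z, hz, rfl⟩
  linarith [(abs_le.mp (hLip z hz y hy)).1, arccos_le_pi ⟪z, y⟫, arccos_nonneg ⟪x, z⟫]

lemma sub_arccos_le_lowerEnv
    (hLip : ∀ x ∈ Λ₀, ∀ y ∈ Λ₀, |f x - f y| ≤ arccos ⟪x, y⟫) (hy : y ∈ Λ₀) :
    f y - arccos ⟪x, y⟫ ≤ lowerEnv Λ₀ f x :=
  le_csSup (bddAbove_sub_arccos_image hLip hy) ⟨y, hy, rfl⟩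

lemma upperEnv_le_add_arccos
    (hLip : ∀ x ∈ Λ₀, ∀ y ∈ Λ₀, |f x - f y| ≤ arccos ⟪x, y⟫) (hy : y ∈ Λ₀) :
    upperEnv Λ₀ f x ≤ f y + arccos ⟪x, y⟫ :=
  csInf_le (bddBelow_add_arccos_image hLip hy) ⟨y, hy, rfl⟩

lemma abs_sub_le_arccos_of_mem_Icc_envelopes
    (hLip : ∀ x ∈ Λ₀, ∀ y ∈ Λ₀, |f x - f y| ≤ arccos ⟪x, y⟫) (hy : y ∈ Λ₀) {θ : ℝ}
    (hθ : θ ∈ Set.Icc (lowerEnv Λ₀ f x) (upperEnv Λ₀ f x)) :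
    |θ - f y| ≤ arccos ⟪x, y⟫ := by
  have hlow := sub_arccos_le_lowerEnv (x := x) hLip hy
  have hupp := upperEnv_le_add_arccos (x := x) hLip hy
  rw [abs_le]
  constructor <;> linarith [hθ.1, hθ.2]

end Envelopes

lemma exists_mem_openHemi_arccos_inner_eq {e y : EuclideanSpace ℝ (Fin 3)} (he : ‖e‖ = 1)
    (hy : y ∈ equator e) {t : ℝ} (ht₀ : 0 < t) (ht : t < π) :
    ∃ x ∈ openHemi e, arccos ⟪x, y⟫ = t := by
  have hyy : ⟪y, y⟫ = 1 := by rw [real_inner_self_eq_norm_sq, hy.1, one_pow]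
  have hee : ⟪e, e⟫ = 1 := by rw [real_inner_self_eq_norm_sq, he, one_pow]
  have hye : ⟪y, e⟫ = 0 := hy.2
  have hey : ⟪e, y⟫ = 0 := by rw [real_inner_comm, hye]
  refine ⟨cos t • y + sin t • e, ⟨?_, ?_⟩, ?_⟩
  · rw [← pow_eq_one_iff_of_nonneg (norm_nonneg _) two_ne_zero, ← real_inner_self_eq_norm_sq]
    simp only [inner_add_left, inner_add_right, real_inner_smul_left, real_inner_smul_right,
      hyy, hee, hye, hey]
    linear_combination sin_sq_add_cos_sq t
  · simp only [inner_add_left, real_inner_smul_left, hye, hee]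
    linarith [sin_pos_of_pos_of_lt_pi ht₀ ht]
  · simp only [inner_add_left, real_inner_smul_left, hyy, hey, mul_one, mul_zero, add_zero]
    exact arccos_cos ht₀.le ht.le

def invisibleDomain (e : EuclideanSpace ℝ (Fin 3)) (Λ₀ : Set (EuclideanSpace ℝ (Fin 3)))
    (f : EuclideanSpace ℝ (Fin 3) → ℝ) : Set (EuclideanSpace ℝ (Fin 3) × ℝ) :=
  {p | p.1 ∈ openHemi e ∧ lowerEnv Λ₀ f p.1 < p.2 ∧ p.2 < upperEnv Λ₀ f p.1}

section InvisibleDomain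

variable {e : EuclideanSpace ℝ (Fin 3)} {Λ₀ : Set (EuclideanSpace ℝ (Fin 3))}
  {f : EuclideanSpace ℝ (Fin 3) → ℝ} {y : EuclideanSpace ℝ (Fin 3)}

lemma eq_of_mk_mem_closure_invisibleDomain
    (hLip : ∀ x ∈ Λ₀, ∀ y ∈ Λ₀, |f x - f y| ≤ arccos ⟪x, y⟫) (hy : y ∈ Λ₀) (hy₁ : ‖y‖ = 1)
    {θ : ℝ} (h : (y, θ) ∈ closure (invisibleDomain e Λ₀ f)) : θ = f y := by
  have hclosed : IsClosed {p : EuclideanSpace ℝ (Fin 3) × ℝ | |p.2 - f y| ≤ arccos ⟪p.1, y⟫} :=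
    isClosed_le (by fun_prop) (continuous_arccos.comp (by fun_prop))
  have hsub : invisibleDomain e Λ₀ f ⊆ {p | |p.2 - f y| ≤ arccos ⟪p.1, y⟫} := fun p hp =>
    abs_sub_le_arccos_of_mem_Icc_envelopes hLip hy ⟨hp.2.1.le, hp.2.2.le⟩
  have hθ : |θ - f y| ≤ arccos ⟪y, y⟫ := closure_minimal hsub hclosed h
  rw [arccos_inner_self_of_norm_eq_one hy₁] at hθ
  exact sub_eq_zero.mp (abs_nonpos_iff.mp hθ)

lemma mk_mem_closure_invisibleDomain (he : ‖e‖ = 1)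
    (hLip : ∀ x ∈ Λ₀, ∀ y ∈ Λ₀, |f x - f y| ≤ arccos ⟪x, y⟫)
    (hgen : ∀ x ∈ openHemi e, lowerEnv Λ₀ f x < upperEnv Λ₀ f x)
    (hyΛ : y ∈ Λ₀) (hy : y ∈ equator e) :
    (y, f y) ∈ closure (invisibleDomain e Λ₀ f) := by
  rw [Metric.mem_closure_iff]
  intro ε hε
  set t := min (ε / 2) 1
  have ht₀ : 0 < t := by positivity
  have htε : t < ε := (min_le_left _ _).trans_lt (half_lt_self hε)
  have htπ : t < π := (min_le_right _ _).trans_lt (by linarith [pi_gt_three])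
  obtain ⟨x, hxD, hxy⟩ := exists_mem_openHemi_arccos_inner_eq he hy ht₀ htπ
  obtain ⟨θ, hθ⟩ := exists_between (hgen x hxD)
  refine ⟨(x, θ), ⟨hxD, hθ⟩, ?_⟩
  have hdx : dist y x ≤ t := by
    rw [dist_comm, dist_eq_norm, ← hxy]
    exact norm_sub_le_arccos_inner hxD.1 hy.1
  have hdθ : dist (f y) θ ≤ t := by
    rw [Real.dist_eq, abs_sub_comm, ← hxy]
    exact abs_sub_le_arccos_of_mem_Icc_envelopes hLip hyΛ ⟨hθ.1.le, hθ.2.le⟩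
  rw [Prod.dist_eq]
  exact (max_le hdx hdθ).trans_lt htε

end InvisibleDomain

/-- For a generic `1`-Lipschitz map `f : ∂D → ℝ`, the closure of the
invisible domain `E = {(x,θ) : x ∈ D, f₋(x) < θ < f₊(x)}` meets the conformal
boundary `∂D × ℝ` exactly in the graph of `f`. -/
theorem closure_invisible_domain_meets_boundary_in_graph
    (e : EuclideanSpace ℝ (Fin 3)) (he : ‖e‖ = 1)
    (f : EuclideanSpace ℝ (Fin 3) → ℝ)
    (hLip : ∀ x ∈ equator e, ∀ y ∈ equator e, |f x - f y| ≤ Real.arccos ⟪x, y⟫)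
    (hgen : ∀ x ∈ openHemi e, lowerEnv (equator e) f x < upperEnv (equator e) f x) :
    closure {p : EuclideanSpace ℝ (Fin 3) × ℝ |
        p.1 ∈ openHemi e ∧ lowerEnv (equator e) f p.1 < p.2 ∧
          p.2 < upperEnv (equator e) f p.1} ∩
      {p : EuclideanSpace ℝ (Fin 3) × ℝ | p.1 ∈ equator e} =
    {p : EuclideanSpace ℝ (Fin 3) × ℝ | p.1 ∈ equator e ∧ p.2 = f p.1} := by
  ext ⟨y, θ⟩
  constructor
  · rintro ⟨hcl, hy⟩
    exact ⟨hy, eq_of_mk_mem_closure_invisibleDomain hLip hy hy.1 hcl⟩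
  · rintro ⟨hy, rfl : θ = f y⟩
    exact ⟨mk_mem_closure_invisibleDomain he hLip hgen hy hy, hy⟩
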